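/- Let σ be the logistic function and γ ∈ [0,1) a constant. There is no continuously twice differentiable function J : ℝ² → ℝ such that ∂J/∂θ₁ = γ·σ(θ₂)·σ'(θ₁) and ∂J/∂θ₂ = σ(θ₁)·σ'(θ₂) everywhere on ℝ². -/

import Mathlib

noncomputable def logistic (x : ℝ) : ℝ := 1 / (1 + Real.exp (-x))

noncomputable def logisticDeriv (x : ℝ) : ℝ := logistic x * (1 - logistic x)

lemma one_add_exp_pos (x : ℝ) : 0 < 1 + Real.exp (-x) := by positivity

lemma hasDerivAt_logistic (x : ℝ) : HasDerivAt logistic (logisticDeriv x) x := by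
  have h1 : HasDerivAt (fun x : ℝ => 1 + Real.exp (-x)) (-Real.exp (-x)) x := by
    simpa using (((Real.hasDerivAt_exp (-x)).comp x (hasDerivAt_neg x)).const_add 1)
  have h2 := h1.inv (ne_of_gt (one_add_exp_pos x))
  have h3 : HasDerivAt logistic (Real.exp (-x) / (1 + Real.exp (-x)) ^ 2) x := by
    have : logistic = fun x => (1 + Real.exp (-x))⁻¹ := by
      funext z; simp [logistic, one_div]
    rw [this]
    rw [neg_neg] at h2
    exact h2
  convert h3 using 1
  have hpos := one_add_exp_pos x
  rw [logisticDeriv, logistic]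
  field_simp
  ring

/-- There is no C² function `J : ℝ² → ℝ` whose partial derivatives are the
components of the biased policy gradient of the counterexample MDP. -/
theorem no_C2_potential (γ : ℝ) (hγ0 : 0 ≤ γ) (hγ1 : γ < 1) :
    ¬ ∃ J : ℝ → ℝ → ℝ, ContDiff ℝ 2 (Function.uncurry J) ∧
      (∀ θ₁ θ₂ : ℝ,
        deriv (fun x => J x θ₂) θ₁ = γ * logistic θ₂ * logisticDeriv θ₁ ∧
        deriv (fun y => J θ₁ y) θ₂ = logistic θ₁ * logisticDeriv θ₂) := by
  rintro ⟨J, hJ, h⟩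
  have hdiff : Differentiable ℝ (Function.uncurry J) :=
    hJ.differentiable (by norm_num)
  have hd1 : ∀ y, Differentiable ℝ (fun x => J x y) := fun y =>
    hdiff.comp (differentiable_id.prodMk (differentiable_const y))
  have hd2 : ∀ x, Differentiable ℝ (fun y => J x y) := fun x =>
    hdiff.comp ((differentiable_const x).prodMk differentiable_id)
  -- partial derivatives as HasDerivAt
  have h1 : ∀ x y, HasDerivAt (fun x => J x y) (γ * logistic y * logisticDeriv x) x := by
    intro x y
    have := ((hd1 y) x).hasDerivAt
    rwa [(h x y).1] at this
  have h2 : ∀ x y, HasDerivAt (fun y => J x y) (logistic x * logisticDeriv y) y := by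
    intro x y
    have := ((hd2 x) y).hasDerivAt
    rwa [(h x y).2] at this
  -- J x y = J 0 y + γ * logistic y * (logistic x - logistic 0)
  have key : ∀ x y, J x y = J 0 y + γ * logistic y * (logistic x - logistic 0) := by
    intro x y
    have hf : ∀ z, HasDerivAt (fun x => J x y - γ * logistic y * logistic x) 0 z := by
      intro z
      have := (h1 z y).sub (((hasDerivAt_logistic z).const_mul (γ * logistic y)))
      rw [sub_self] at this
      exact this
    have hconst : (fun x => J x y - γ * logistic y * logistic x) x
        = (fun x => J x y - γ * logistic y * logistic x) 0 :=
      is_const_of_deriv_eq_zero (fun z => (hf z).differentiableAt)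
        (fun z => (hf z).deriv) x 0
    simp only at hconst
    linarith [hconst]
  -- differentiate key in y at fixed x
  have key2 : ∀ x y, logistic x * logisticDeriv y
      = logistic 0 * logisticDeriv y + γ * logisticDeriv y * (logistic x - logistic 0) := by
    intro x y
    have hr : HasDerivAt (fun y => J 0 y + γ * logistic y * (logistic x - logistic 0))
        (logistic 0 * logisticDeriv y + γ * logisticDeriv y * (logistic x - logistic 0)) y := by
      have := (h2 0 y).add
        (((hasDerivAt_logistic y).const_mul γ).mul_const (logistic x - logistic 0))
      exact this
    have hl : HasDerivAt (fun y => J x y) (logistic x * logisticDeriv y) y := h2 x y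
    have heq : (fun y => J x y) = fun y => J 0 y + γ * logistic y * (logistic x - logistic 0) :=
      funext fun y => key x y
    rw [heq] at hl
    exact hl.unique hr
  -- contradiction at x = 1, y = 0
  have h10 := key2 1 0
  have hfac : (1 - γ) * (logistic 1 - logistic 0) * logisticDeriv 0 = 0 := by
    linear_combination h10
  have hL0 : logistic 0 = 1/2 := by norm_num [logistic]
  have hD0 : logisticDeriv 0 = 1/4 := by rw [logisticDeriv, hL0]; norm_num
  have hlt : logistic 0 < logistic 1 := by
    rw [hL0, logistic]
    rw [div_lt_div_iff₀ (by norm_num) (one_add_exp_pos 1)]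
    have : Real.exp (-1) < 1 := Real.exp_lt_one_iff.mpr (by norm_num)
    linarith
  rw [hD0] at hfac
  nlinarith [hfac, hlt]
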